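/- Let Γ be a finite simple graph and let W be a set of vertices inducing a complete subgraph (a clique). Then the edge set of the induced subgraph Γ[W] is a modular flat of the graphic matroid M(Γ). -/

import Mathlib

open scoped Classical

namespace Paper

/-- `M` is the graphic matroid of the simple graph `Γ`: its ground set is the edge set of
`Γ` and its independent sets are precisely the edge sets of forests. -/
def IsGraphicMatroidOf {V : Type*} (Γ : SimpleGraph V) (M : Matroid (Sym2 V)) : Prop :=
  M.E = Γ.edgeSet ∧
    ∀ I : Set (Sym2 V), M.Indep I ↔ I ⊆ Γ.edgeSet ∧ (SimpleGraph.fromEdgeSet I).IsAcyclic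

noncomputable def mrk {β : Type*} (M : Matroid β) (X : Set β) : ℕ :=
  sSup {n | ∃ I, M.Indep I ∧ I ⊆ X ∧ I.ncard = n}

def ModularFlat {β : Type*} (M : Matroid β) (X : Set β) : Prop :=
  M.IsFlat X ∧ ∀ Y, M.IsFlat Y →
    mrk M X + mrk M Y = mrk M (X ∩ Y) + mrk M (M.closure (X ∪ Y))

def Round {β : Type*} (M : Matroid β) : Prop :=
  ¬ ∃ F₁ F₂ : Set β, M.IsFlat F₁ ∧ M.IsFlat F₂ ∧ F₁ ≠ M.E ∧ F₂ ≠ M.E ∧ M.E = F₁ ∪ F₂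

end Paper

/-! Let `X` be the edges inside the clique `W`, `Y` a flat, `B` a basis of `X ∩ Y` and `J` a
basis of `Y`. Two vertices of `W` joined by a path of `J` span an edge of `X ∩ Y` (as `W` is a
clique and `Y` is a flat), so they are also joined by a path of `B`. Replacing every `J`-detour
between vertices of `W` by a `B`-path shows that for `S ⊆ X`, an edge of `X` spanned by `J ∪ S`
is spanned by `B ∪ S`. Extending `J` by some `T ⊆ X` to a basis of `X ∪ Y`, the set `B ∪ T` spans
`X`, whence `r X + r Y ≤ r (X ∩ Y) + r (X ∪ Y)`; the reverse inequality is submodularity. -/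

open Set

namespace SimpleGraph

variable {V : Type*}

lemma reachable_le_of_adj_le_reachable {G H : SimpleGraph V} (h : G.Adj ≤ H.Reachable) :
    G.Reachable ≤ H.Reachable := by
  simp only [reachable_eq_reflTransGen] at h ⊢
  exact Relation.reflTransGen_closed h

lemma support_fromEdgeSet_subset {S : Set (Sym2 V)} {W : Set V} (hS : ∀ e ∈ S, ∀ v ∈ e, v ∈ W) :
    (fromEdgeSet S).support ⊆ W := by
  rintro a ⟨b, hab⟩
  exact hS _ ((fromEdgeSet_adj S).1 hab).1 a (Sym2.mem_mk_left a b)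

lemma fromEdgeSet_insert (s : Set (Sym2 V)) (u v : V) :
    fromEdgeSet (insert s(u, v) s) = fromEdgeSet s ⊔ edge u v := by
  rw [insert_eq, fromEdgeSet_union, sup_comm, edge]

lemma reachable_sup_of_support_subset {G H K : SimpleGraph V} {W : Set V}
    (hK : K.support ⊆ W) (hGH : ∀ u ∈ W, ∀ v ∈ W, G.Reachable u v → H.Reachable u v)
    {u v : V} (hu : u ∈ W) (hv : v ∈ W) (h : (G ⊔ K).Reachable u v) :
    (H ⊔ K).Reachable u v := by
  have hH : ∀ {a b}, H.Reachable a b → (H ⊔ K).Reachable a b := (·.mono le_sup_left)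
  -- Walking back from `v`, a `K`-edge lands in `W`, where the `G`-detour so far can be replaced.
  have key : ∀ a (p : (G ⊔ K).Walk a v),
      ∃ w ∈ W, G.Reachable a w ∧ (H ⊔ K).Reachable w v := by
    intro a p
    clear h
    induction p with
    | nil => exact ⟨_, hv, .rfl, .rfl⟩
    | @cons a x _ hax _ ih =>
      obtain ⟨w, hw, hxw, hwv⟩ := ih hv
      rcases (sup_adj _ _ _ _).1 hax with hG | hK'
      · exact ⟨w, hw, hG.reachable.trans hxw, hwv⟩
      · have hx : x ∈ W := hK ⟨a, hK'.symm⟩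
        refine ⟨a, hK ⟨x, hK'⟩, .rfl, ?_⟩
        exact ((hK'.reachable.mono le_sup_right).trans (hH (hGH x hx w hw hxw))).trans hwv
  obtain ⟨p⟩ := h
  obtain ⟨w, hw, huw, hwv⟩ := key u p
  exact (hH (hGH u hu w hw huw)).trans hwv

end SimpleGraph

namespace Matroid

variable {α : Type*} {M : Matroid α} {X Y B J : Set α}

lemma eRk_add_eRk_le_of_forall_inter_closure_subset (hX : X ⊆ M.E)
    (hB : M.IsBasis' B (X ∩ Y)) (hJ : M.IsBasis' J Y)
    (h : ∀ S ⊆ X, X ∩ M.closure (J ∪ S) ⊆ M.closure (B ∪ S)) :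
    M.eRk X + M.eRk Y ≤ M.eRk (X ∩ Y) + M.eRk (X ∪ Y) := by
  obtain ⟨K, hK, hJK⟩ := hJ.indep.subset_isBasis'_of_subset (hJ.subset.trans subset_union_right)
  have hKJ : K \ J ⊆ X := by
    rintro d ⟨hdK, hdJ⟩
    refine (hK.subset hdK).resolve_right fun hdY => hdJ ?_
    exact hJ.mem_of_insert_indep hdY (hK.indep.subset (insert_subset hdK hJK))
  have hXspan : X ⊆ M.closure (B ∪ (K \ J)) := by
    intro x hx
    refine h _ hKJ ⟨hx, ?_⟩
    rw [union_sdiff_cancel hJK, hK.closure_eq_closure]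
    exact M.inter_ground_subset_closure _ ⟨.inl hx, hX hx⟩
  calc M.eRk X + M.eRk Y
      ≤ M.eRk (B ∪ (K \ J)) + J.encard := by
        rw [← hJ.encard_eq_eRk, ← M.eRk_closure_eq (B ∪ _)]
        gcongr
        exact M.eRk_mono hXspan
    _ ≤ B.encard + (K \ J).encard + J.encard := by
        gcongr
        exact (M.eRk_le_encard _).trans (encard_union_le _ _)
    _ = M.eRk (X ∩ Y) + M.eRk (X ∪ Y) := by
        rw [add_assoc, encard_sdiff_add_encard_of_subset hJK, hB.encard_eq_eRk, hK.encard_eq_eRk]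

end Matroid

namespace Paper

open SimpleGraph Set Matroid

lemma cast_mrk_eq_eRk {β : Type*} (M : Matroid β) [M.RankFinite] (X : Set β) :
    (mrk M X : ℕ∞) = M.eRk X := by
  obtain ⟨I, hI⟩ := M.exists_isBasis' X
  have hmax : IsGreatest {n | ∃ I, M.Indep I ∧ I ⊆ X ∧ I.ncard = n} I.ncard := by
    refine ⟨⟨I, hI.indep, hI.subset, rfl⟩, ?_⟩
    rintro _ ⟨J, hJ, hJX, rfl⟩
    have hle := hJ.encard_le_eRk_of_subset hJX
    rwa [← hI.encard_eq_eRk, ← hJ.finite.cast_ncard_eq, ← hI.indep.finite.cast_ncard_eq,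
      Nat.cast_le] at hle
  rw [mrk, hmax.csSup_eq, hI.indep.finite.cast_ncard_eq, hI.encard_eq_eRk]

lemma modularFlat_iff_eRk {β : Type*} (M : Matroid β) [M.RankFinite] (X : Set β) :
    ModularFlat M X ↔ M.IsFlat X ∧
      ∀ Y, M.IsFlat Y → M.eRk X + M.eRk Y = M.eRk (X ∩ Y) + M.eRk (X ∪ Y) := by
  refine and_congr_right fun _ => forall₂_congr fun Y _ => ?_
  rw [← Nat.cast_inj (R := ℕ∞)]
  push_cast
  simp only [cast_mrk_eq_eRk, eRk_closure_eq]

/-- The edge set of the induced subgraph `Γ[W]`, as a set of edges of `Γ`. -/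
def inducedEdgeSet {V : Type*} (Γ : SimpleGraph V) (W : Set V) : Set (Sym2 V) :=
  {e ∈ Γ.edgeSet | ∀ v ∈ e, v ∈ W}

namespace IsGraphicMatroidOf

variable {V : Type*} {Γ : SimpleGraph V} {M : Matroid (Sym2 V)} {I S : Set (Sym2 V)} {u v : V}

lemma indep_insert_iff (hM : IsGraphicMatroidOf Γ M) (hI : M.Indep I) (he : s(u, v) ∈ Γ.edgeSet)
    (heI : s(u, v) ∉ I) : M.Indep (insert s(u, v) I) ↔ ¬ (fromEdgeSet I).Reachable u v := by
  obtain ⟨hIE, hIac⟩ := (hM.2 I).1 hI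
  have huv : u ≠ v := Γ.ne_of_adj he
  rw [hM.2, insert_subset_iff, fromEdgeSet_insert, isAcyclic_sup_fromEdgeSet_iff]
  simp [fromEdgeSet_adj, heI, huv, hIE, hIac, he]

lemma mem_closure_indep_iff (hM : IsGraphicMatroidOf Γ M) (hI : M.Indep I)
    (he : s(u, v) ∈ Γ.edgeSet) : s(u, v) ∈ M.closure I ↔ (fromEdgeSet I).Reachable u v := by
  by_cases heI : s(u, v) ∈ I
  · exact iff_of_true (M.subset_closure I hI.subset_ground heI)
      ((fromEdgeSet_adj I).2 ⟨heI, Γ.ne_of_adj he⟩).reachable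
  have heE : insert s(u, v) I ⊆ M.E := insert_subset (hM.1 ▸ he) hI.subset_ground
  rw [hI.mem_closure_iff_of_notMem heI, ← not_indep_iff heE, hM.indep_insert_iff hI he heI,
    not_not]

lemma mem_closure_iff (hM : IsGraphicMatroidOf Γ M) (hS : S ⊆ Γ.edgeSet)
    (he : s(u, v) ∈ Γ.edgeSet) : s(u, v) ∈ M.closure S ↔ (fromEdgeSet S).Reachable u v := by
  obtain ⟨I, hI⟩ := M.exists_isBasis' S
  rw [← hI.closure_eq_closure, hM.mem_closure_indep_iff hI.indep he]
  refine ⟨(·.mono (fromEdgeSet_mono hI.subset)), fun h => ?_⟩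
  refine reachable_le_of_adj_le_reachable (fun a b hab => ?_) u v h
  rw [fromEdgeSet_adj] at hab
  rw [← hM.mem_closure_indep_iff hI.indep (hS hab.1), hI.closure_eq_closure]
  exact M.subset_closure S (hM.1 ▸ hS) hab.1

lemma isFlat_inducedEdgeSet (hM : IsGraphicMatroidOf Γ M) (W : Set V) :
    M.IsFlat (inducedEdgeSet Γ W) := by
  have hXE : inducedEdgeSet Γ W ⊆ Γ.edgeSet := sep_subset _ _
  refine isFlat_iff_closure_eq.2 <| (M.subset_closure _ (hM.1 ▸ hXE)).antisymm' ?_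
  intro e he
  have heE : e ∈ Γ.edgeSet := hM.1 ▸ M.closure_subset_ground _ he
  induction e using Sym2.ind with | _ u v
  have huv := Γ.ne_of_adj heE
  have hr := (hM.mem_closure_iff hXE heE).1 he
  have hsupp := support_fromEdgeSet_subset (S := inducedEdgeSet Γ W) fun _ hf => hf.2
  refine ⟨heE, fun x hx => ?_⟩
  rcases Sym2.mem_iff.1 hx with rfl | rfl
  · exact hsupp (mem_support_of_reachable huv hr)
  · exact hsupp (mem_support_of_reachable huv.symm hr.symm)

lemma inducedEdgeSet_inter_closure_union_subset (hM : IsGraphicMatroidOf Γ M) {W : Set V}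
    (hW : Γ.IsClique W) {Y B J : Set (Sym2 V)} (hY : M.IsFlat Y)
    (hB : M.IsBasis' B (inducedEdgeSet Γ W ∩ Y)) (hJ : M.IsBasis' J Y)
    (hS : S ⊆ inducedEdgeSet Γ W) :
    inducedEdgeSet Γ W ∩ M.closure (J ∪ S) ⊆ M.closure (B ∪ S) := by
  have hBE : B ⊆ Γ.edgeSet := hM.1 ▸ hB.indep.subset_ground
  have hJE : J ⊆ Γ.edgeSet := hM.1 ▸ hJ.indep.subset_ground
  have hSE : S ⊆ Γ.edgeSet := hS.trans (sep_subset _ _)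
  have hJB : ∀ u ∈ W, ∀ v ∈ W,
      (fromEdgeSet J).Reachable u v → (fromEdgeSet B).Reachable u v := by
    intro u hu v hv huv
    obtain rfl | hne := eq_or_ne u v
    · rfl
    have he : s(u, v) ∈ inducedEdgeSet Γ W := ⟨hW hu hv hne, by simp [hu, hv]⟩
    have heY : s(u, v) ∈ Y := by
      rwa [← hY.closure, ← hJ.closure_eq_closure, hM.mem_closure_iff hJE he.1]
    rw [← hM.mem_closure_iff hBE he.1, hB.closure_eq_closure]
    exact M.subset_closure _ (inter_subset_right.trans hY.subset_ground) ⟨he, heY⟩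
  rintro e ⟨heX, he⟩
  induction e using Sym2.ind with | _ u v
  rw [hM.mem_closure_iff (union_subset hJE hSE) heX.1, fromEdgeSet_union] at he
  rw [hM.mem_closure_iff (union_subset hBE hSE) heX.1, fromEdgeSet_union]
  exact reachable_sup_of_support_subset (support_fromEdgeSet_subset fun e he => (hS he).2) hJB
    (heX.2 u (Sym2.mem_mk_left u v)) (heX.2 v (Sym2.mem_mk_right u v)) he

end IsGraphicMatroidOf

/-- The edge set of the subgraph induced by a clique is a modular flat of the graphic
matroid. -/
theorem stmt15 {V : Type*} [Fintype V] (Γ : SimpleGraph V)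
    (M : Matroid (Sym2 V)) (hM : IsGraphicMatroidOf Γ M)
    {W : Set V} (hW : Γ.IsClique W) :
    ModularFlat M {e ∈ Γ.edgeSet | ∀ v ∈ e, v ∈ W} := by
  have : M.Finite := ⟨hM.1 ▸ toFinite _⟩
  refine (modularFlat_iff_eRk M _).2 ⟨hM.isFlat_inducedEdgeSet W, fun Y hY => ?_⟩
  obtain ⟨B, hB⟩ := M.exists_isBasis' (inducedEdgeSet Γ W ∩ Y)
  obtain ⟨J, hJ⟩ := M.exists_isBasis' Y
  refine le_antisymm ?_ (M.eRk_inter_add_eRk_union_le _ _)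
  exact eRk_add_eRk_le_of_forall_inter_closure_subset (hM.1 ▸ sep_subset _ _) hB hJ
    fun S hS => hM.inducedEdgeSet_inter_closure_union_subset hW hY hB hJ hS

end Paper
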